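/- Let Y be compact convex, ω 1-strongly convex on Y with respect to a norm ‖·‖, ψ proper closed convex, μ > 0. For x₁, x₂, let ŷ₁, ŷ₂ be the (unique) maximizers of y ↦ ⟨xᵢ, Ay⟩ − ψ(y) − μω(y) over Y. Then ⟨A^T(x₁ − x₂), ŷ₁ − ŷ₂⟩ ≥ μ‖ŷ₁ − ŷ₂‖², and consequently ‖ŷ₁ − ŷ₂‖ ≤ (1/μ)‖A^T(x₁ − x₂)‖_*. -/

import Mathlib

/-! The objective `y ↦ ⟪x, A y⟫ - ψ y - μ ω y` is `μ`-strongly concave, so at its maximizer `ŷ`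
it exceeds its value at any `y ∈ Y` by at least `μ/2 ‖ŷ - y‖²` (compare with the points of the
segment from `ŷ` to `y` and let them tend to `ŷ`). Writing this for `ŷ₁` against `ŷ₂` and for `ŷ₂`
against `ŷ₁` and adding, the `ψ` and `ω` terms cancel and leave
`μ ‖ŷ₁ - ŷ₂‖² ≤ ⟪Aᵀ(x₁ - x₂), ŷ₁ - ŷ₂⟫`; Cauchy–Schwarz then gives the Lipschitz bound. -/

open scoped RealInnerProductSpace

open Filter Set Topology in
lemma le_of_forall_one_sub_mul_le {c d : ℝ} (h : ∀ t ∈ Ioo (0 : ℝ) 1, (1 - t) * c ≤ d) :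
    c ≤ d := by
  have hlim : Tendsto (fun t : ℝ => (1 - t) * c) (𝓝[>] 0) (𝓝 c) := by
    have : Continuous fun t : ℝ => (1 - t) * c := by fun_prop
    simpa using (this.tendsto 0).mono_left nhdsWithin_le_nhds
  exact le_of_tendsto hlim (eventually_of_mem (Ioo_mem_nhdsGT one_pos) h)

section StrongConvexity
variable {E : Type*} [NormedAddCommGroup E] [NormedSpace ℝ E] {s : Set E} {f g : E → ℝ}
  {m c : ℝ} {x y : E}

lemma StrongConvexOn.const_mul (hf : StrongConvexOn s m f) (hc : 0 ≤ c) :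
    StrongConvexOn s (c * m) fun x => c * f x := by
  refine ⟨hf.1, fun x hx y hy a b ha hb hab => ?_⟩
  have := mul_le_mul_of_nonneg_left (hf.2 hx hy ha hb hab) hc
  simp only [smul_eq_mul] at this ⊢
  linarith

lemma ConcaveOn.sub_strongConvexOn (hg : ConcaveOn ℝ s g) (hf : StrongConvexOn s m f) :
    StrongConcaveOn s m (g - f) := by
  simpa [StrongConcaveOn] using hg.uniformConcaveOn_zero.sub hf

lemma StrongConcaveOn.mul_sq_norm_sub_le_of_isMaxOn (hf : StrongConcaveOn s m f) (hx : x ∈ s)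
    (hy : y ∈ s) (hmax : IsMaxOn f s x) : m / 2 * ‖x - y‖ ^ 2 ≤ f x - f y := by
  refine le_of_forall_one_sub_mul_le fun t ⟨ht₀, ht₁⟩ => ?_
  have hconc := hf.2 hx hy (sub_nonneg.2 ht₁.le) ht₀.le (sub_add_cancel 1 t)
  have hle : f ((1 - t) • x + t • y) ≤ f x :=
    hmax (hf.1 hx hy (sub_nonneg.2 ht₁.le) ht₀.le (sub_add_cancel 1 t))
  simp only [smul_eq_mul] at hconc
  refine le_of_mul_le_mul_left ?_ ht₀
  nlinarith
end StrongConvexity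

lemma norm_le_of_mul_sq_norm_le_inner {F : Type*} [NormedAddCommGroup F] [InnerProductSpace ℝ F]
    {μ : ℝ} (hμ : 0 < μ) {v w : F} (h : μ * ‖v‖ ^ 2 ≤ ⟪w, v⟫) : ‖v‖ ≤ 1 / μ * ‖w‖ := by
  rw [one_div_mul_eq_div, le_div_iff₀ hμ]
  have hcs := h.trans (real_inner_le_norm w v)
  rcases (norm_nonneg v).eq_or_lt with hv | hv
  · simp [← hv]
  · nlinarith

theorem stmt_3_general {m n : ℕ}
    (Y : Set (EuclideanSpace ℝ (Fin m)))
    (ω : EuclideanSpace ℝ (Fin m) → ℝ) (hω : StrongConvexOn Y 1 ω)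
    (ψ : EuclideanSpace ℝ (Fin m) → ℝ) (hψ : ConvexOn ℝ Y ψ)
    (A : EuclideanSpace ℝ (Fin m) →L[ℝ] EuclideanSpace ℝ (Fin n))
    (μ : ℝ) (hμ : 0 < μ)
    (x₁ x₂ : EuclideanSpace ℝ (Fin n))
    (y₁ y₂ : EuclideanSpace ℝ (Fin m))
    (hy₁ : y₁ ∈ Y) (hy₂ : y₂ ∈ Y)
    (hmax₁ : IsMaxOn (fun y => ⟪x₁, A y⟫ - ψ y - μ * ω y) Y y₁)
    (hmax₂ : IsMaxOn (fun y => ⟪x₂, A y⟫ - ψ y - μ * ω y) Y y₂) :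
    μ * ‖y₁ - y₂‖ ^ 2 ≤ ⟪ContinuousLinearMap.adjoint A (x₁ - x₂), y₁ - y₂⟫ ∧
    ‖y₁ - y₂‖ ≤ (1 / μ) * ‖ContinuousLinearMap.adjoint A (x₁ - x₂)‖ := by
  have hconc (x : EuclideanSpace ℝ (Fin n)) :
      StrongConcaveOn Y μ fun y => ⟪x, A y⟫ - ψ y - μ * ω y :=
    ((((innerSL ℝ x).comp A).toLinearMap.concaveOn hω.1).sub hψ).sub_strongConvexOn
      (by simpa using hω.const_mul hμ.le)
  have h₁ := (hconc x₁).mul_sq_norm_sub_le_of_isMaxOn hy₁ hy₂ hmax₁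
  have h₂ := (hconc x₂).mul_sq_norm_sub_le_of_isMaxOn hy₂ hy₁ hmax₂
  rw [norm_sub_rev] at h₂
  have hmono : μ * ‖y₁ - y₂‖ ^ 2 ≤ ⟪ContinuousLinearMap.adjoint A (x₁ - x₂), y₁ - y₂⟫ := by
    rw [ContinuousLinearMap.adjoint_inner_left, map_sub, inner_sub_left, inner_sub_right,
      inner_sub_right]
    linarith
  exact ⟨hmono, norm_le_of_mul_sq_norm_le_inner hμ hmono⟩

/-- Contraction property of the maximizers of the smoothed inner problem. -/
theorem stmt_3 {m n : ℕ}
    (Y : Set (EuclideanSpace ℝ (Fin m))) (hYc : IsCompact Y)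
    (ω : EuclideanSpace ℝ (Fin m) → ℝ) (hω : StrongConvexOn Y 1 ω)
    (ψ : EuclideanSpace ℝ (Fin m) → ℝ) (hψ : ConvexOn ℝ Y ψ)
    (A : EuclideanSpace ℝ (Fin m) →L[ℝ] EuclideanSpace ℝ (Fin n))
    (μ : ℝ) (hμ : 0 < μ)
    (x₁ x₂ : EuclideanSpace ℝ (Fin n))
    (y₁ y₂ : EuclideanSpace ℝ (Fin m))
    (hy₁ : y₁ ∈ Y) (hy₂ : y₂ ∈ Y)
    (hmax₁ : IsMaxOn (fun y => ⟪x₁, A y⟫ - ψ y - μ * ω y) Y y₁)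
    (hmax₂ : IsMaxOn (fun y => ⟪x₂, A y⟫ - ψ y - μ * ω y) Y y₂) :
    μ * ‖y₁ - y₂‖ ^ 2 ≤ ⟪ContinuousLinearMap.adjoint A (x₁ - x₂), y₁ - y₂⟫ ∧
    ‖y₁ - y₂‖ ≤ (1 / μ) * ‖ContinuousLinearMap.adjoint A (x₁ - x₂)‖ :=
  stmt_3_general Y ω hω ψ hψ A μ hμ x₁ x₂ y₁ y₂ hy₁ hy₂ hmax₁ hmax₂
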